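/- arXiv:1006.4427 — 2 statements merged into one kernel-verified Lean document; each statement's English description precedes it below -/
import Mathlib

section
/- For any p > 0 there exists C_p > 0 such that, with probability at least 1 − |Λ|^{−p}, the following holds: for every j such that E_j(ω,Λ) ∈ I (i.e. the eigenvalue is in the localized region), the diameter of the set C(φ_j(ω,Λ)) of localization centers of the associated normalized eigenvector is less than C_p log|Λ|. -/
open MeasureTheory ProbabilityTheory Filter Topology Finset
open scoped Pointwise ENNReal

noncomputable section

/-- The lattice `ℤ^d`. -/
abbrev ZLat (d : ℕ) := Fin d → ℤ

/-- The discrete torus `Λ_L` of side `2L+1` (box with periodic boundary conditions). -/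
abbrev Box (d L : ℕ) := Fin d → ZMod (2 * L + 1)

/-- The representative of a point of `ZMod (2L+1)` in `[-L, L]`. -/
def rep (L : ℕ) (x : ZMod (2 * L + 1)) : ℤ := (x.val : ℤ) - (L : ℤ)

/-- The representative in `[-L,L]^d ∩ ℤ^d` of a point of the torus. -/
def repPt {d : ℕ} (L : ℕ) (m : Box d L) : ZLat d := fun i => rep L (m i)

/-- Nearest neighbours on the torus. -/
def Adj {d L : ℕ} (m n : Box d L) : Prop :=
  ∃ i, (m i = n i + 1 ∨ m i + 1 = n i) ∧ ∀ j, j ≠ i → m j = n j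

instance {d L : ℕ} (m n : Box d L) : Decidable (Adj m n) := by
  unfold Adj; infer_instance

lemma Adj.symm' {d L : ℕ} {m n : Box d L} (h : Adj m n) : Adj n m := by
  obtain ⟨i, h1, h2⟩ := h
  refine ⟨i, ?_, fun j hj => (h2 j hj).symm⟩
  rcases h1 with h1 | h1
  · exact Or.inr h1.symm
  · exact Or.inl h1.symm

/-- The finite volume Anderson Hamiltonian `H_ω(Λ_L) = -Δ + V` on the box `Λ_L`
with periodic boundary conditions, as a matrix. -/
def ham (d L : ℕ) (v : ZLat d → ℝ) : Matrix (Box d L) (Box d L) ℝ := fun m n =>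
  (if Adj m n then (1 : ℝ) else 0) + (if m = n then v (repPt L n) else 0)

lemma ham_isHermitian (d L : ℕ) (v : ZLat d → ℝ) : (ham d L v).IsHermitian := by
  show (ham d L v).conjTranspose = ham d L v
  ext m n
  simp only [Matrix.conjTranspose_apply, star_trivial, ham]
  by_cases hmn : n = m
  · subst hmn; rfl
  · have h1 : ¬m = n := fun h => hmn h.symm
    rw [if_neg hmn, if_neg h1]
    by_cases ha : Adj n m
    · rw [if_pos ha, if_pos ha.symm']
    · rw [if_neg ha, if_neg fun h => ha h.symm']

/-- The number of sites of the box, `|Λ_L| = (2L+1)^d`. -/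
abbrev nsites (d L : ℕ) : ℕ := Fintype.card (Box d L)

/-- The volume `|Λ_L| = (2L+1)^d` as a real number. -/
def volΛ (d L : ℕ) : ℝ := ((2 * L + 1 : ℕ) : ℝ) ^ d

/-- The eigenvalues `E_1(ω,Λ) ≤ ⋯ ≤ E_N(ω,Λ)` of the finite volume Hamiltonian,
ordered increasingly and repeated according to multiplicity. -/
def sortedEig (d L : ℕ) (v : ZLat d → ℝ) : Fin (nsites d L) → ℝ :=
  (ham_isHermitian d L v).eigenvalues₀ ∘ ⇑(Tuple.sort (ham_isHermitian d L v).eigenvalues₀)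

open Classical in
/-- Number of indices `j` satisfying a predicate. -/
def countGen (d L : ℕ) (P : Fin (nsites d L) → Prop) : ℕ :=
  (Finset.univ.filter P).card

/-- number of rescaled eigenvalues `ξ_j = |Λ| ν₀ (E_j - E₀)` lying in `U`. -/
def countXi (d L : ℕ) (v : ZLat d → ℝ) (ν₀ E₀ : ℝ) (U : Set ℝ) : ℕ :=
  countGen d L fun j => volΛ d L * ν₀ * (sortedEig d L v j - E₀) ∈ U

/-- number of eigenvalues of `H_ω(Λ)` lying in `U`. -/
def countEig (d L : ℕ) (v : ZLat d → ℝ) (U : Set ℝ) : ℕ :=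
  countGen d L fun j => sortedEig d L v j ∈ U

/-- `γ₀` is a localization center of `φ : ℓ²(Λ)`, i.e. a point where `|φ|` is maximal. -/
def IsLocCenter {d L : ℕ} (φ : Box d L → ℝ) (γ₀ : Box d L) : Prop :=
  ∀ γ, |φ γ| ≤ |φ γ₀|

/-- The distance of two points of the torus, viewed in `[-L,L]^d ∩ ℤ^d`. -/
def boxDist {d : ℕ} (L : ℕ) (m n : Box d L) : ℝ :=
  ((Finset.univ.sup fun i => (rep L (m i) - rep L (n i)).natAbs : ℕ) : ℝ)

/-- `φ` is a complete orthonormal system of eigenvectors of `H_ω(Λ)`, with `φ j` an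
eigenvector associated to the `j`-th eigenvalue `E_j(ω,Λ)`. -/
def IsEigenSystem (d L : ℕ) (v : ZLat d → ℝ) (φ : Fin (nsites d L) → Box d L → ℝ) : Prop :=
  (∀ j, (ham d L v).mulVec (φ j) = sortedEig d L v j • φ j) ∧
  (∀ j, (∑ γ, φ j γ ^ 2) = 1) ∧
  (∀ j k, j ≠ k → (∑ γ, φ j γ * φ k γ) = 0)

/-- The random potential `(V ω n)_{n ∈ ℤ^d} = (ω_n)` is i.i.d. with a common distribution
admitting a compactly supported bounded density `g`. -/
structure AndersonPotential (d : ℕ) {Ω : Type*} [MeasurableSpace Ω] (Pr : Measure Ω)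
    (V : Ω → ZLat d → ℝ) (g : ℝ → ℝ) : Prop where
  meas : ∀ n, Measurable fun ω => V ω n
  indep : iIndepFun (fun n ω => V ω n) Pr
  distrib : ∀ n, Pr.map (fun ω => V ω n) = volume.withDensity fun x => ENNReal.ofReal (g x)
  g_nonneg : ∀ x, 0 ≤ g x
  g_bounded : ∃ M, ∀ x, g x ≤ M
  g_compact : HasCompactSupport g

/-- `I` is contained in the region of complete localization of `H_ω`: with probability at
least `1 - |Λ|^{-p}`, every eigenfunction of `H_ω(Λ)` with eigenvalue in `I` decays
exponentially away from its localization centers (property (Loc)). -/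
def CompleteLocRegion (d : ℕ) {Ω : Type*} [MeasurableSpace Ω] (Pr : Measure Ω)
    (V : Ω → ZLat d → ℝ) (I : Set ℝ) : Prop :=
  ∃ γc > (0 : ℝ), ∀ p > (0 : ℝ), ∃ C > (0 : ℝ), ∀ L : ℕ, 1 ≤ L →
    1 - volΛ d L ^ (-p) ≤
      (Pr {ω | ∀ E ∈ I, ∀ φ : Box d L → ℝ,
        (ham d L (V ω)).mulVec φ = E • φ → (∑ γ, φ γ ^ 2) = 1 →
        ∀ γ₀, IsLocCenter φ γ₀ → ∀ γ,
          |φ γ| ≤ C * volΛ d L ^ C * Real.exp (-γc * boxDist L γ₀ γ)}).toReal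

/-- The Wegner estimate (W) on `I`. -/
def WegnerEstimate (d : ℕ) {Ω : Type*} [MeasurableSpace Ω] (Pr : Measure Ω)
    (V : Ω → ZLat d → ℝ) (I : Set ℝ) : Prop :=
  ∃ C > (0 : ℝ), ∀ L : ℕ, ∀ a b : ℝ, a ≤ b → Set.Icc a b ⊆ I →
    (Pr {ω | 1 ≤ countEig d L (V ω) (Set.Icc a b)}).toReal ≤ C * (b - a) * volΛ d L

/-- The Minami estimate (M) on `I`. -/
def MinamiEstimate (d : ℕ) {Ω : Type*} [MeasurableSpace Ω] (Pr : Measure Ω)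
    (V : Ω → ZLat d → ℝ) (I : Set ℝ) : Prop :=
  ∃ C > (0 : ℝ), ∀ L : ℕ, ∀ a b : ℝ, a ≤ b → Set.Icc a b ⊆ I →
    (Pr {ω | 2 ≤ countEig d L (V ω) (Set.Icc a b)}).toReal ≤ C * ((b - a) * volΛ d L) ^ 2

/-- `Nids` is the integrated density of states of `H_ω`: it is the distribution function of
the density of states measure, i.e. the almost sure limit of the normalized finite volume
eigenvalue counting functions (at its continuity points). -/
def IsIDS (d : ℕ) {Ω : Type*} [MeasurableSpace Ω] (Pr : Measure Ω)
    (V : Ω → ZLat d → ℝ) (Nids : ℝ → ℝ) : Prop :=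
  Monotone Nids ∧
  ∀ᵐ ω ∂Pr, ∀ E : ℝ, ContinuousAt Nids E →
    Tendsto (fun L : ℕ => (countEig d L (V ω) (Set.Iic E) : ℝ) / volΛ d L)
      atTop (𝓝 (Nids E))

/-- `E₀` belongs to the set `𝓔`: the integrated density of states `Nids` is differentiable
at `E₀` with derivative `ν₀` in the strong sense
`lim_{|x|+|y|→0} (N(E₀+x) - N(E₀+y))/(x-y) = ν₀`. -/
def StrongDiff (Nids : ℝ → ℝ) (E₀ ν₀ : ℝ) : Prop :=
  HasDerivAt Nids ν₀ E₀ ∧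
  ∀ ε > (0 : ℝ), ∃ η > (0 : ℝ), ∀ x y : ℝ, |x| < η → |y| < η → x ≠ y →
    |(Nids (E₀ + x) - Nids (E₀ + y)) / (x - y) - ν₀| < ε

/-- The number of `j` with `E_j(ω,Λ) ∈ IΛ` whose renormalized spacing
`δE_j = |Λ| c (E_{j+1} - E_j)` is at least `x`. -/
def DLScount (d L : ℕ) (v : ZLat d → ℝ) (c : ℝ) (IΛ : Set ℝ) (x : ℝ) : ℕ :=
  countGen d L fun j =>
    sortedEig d L v j ∈ IΛ ∧
    ∃ h : (j : ℕ) + 1 < nsites d L,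
      x ≤ volΛ d L * c * (sortedEig d L v ⟨(j : ℕ) + 1, h⟩ - sortedEig d L v j)

/-- The empirical distribution of the renormalized level spacings. -/
def DLS (d L : ℕ) (v : ZLat d → ℝ) (c : ℝ) (IΛ : Set ℝ) (x : ℝ) : ℝ :=
  (DLScount d L v c IΛ x : ℝ) / (countEig d L v IΛ : ℝ)

/-- The number of `j` with `E_j(ω,Λ) ∈ IΛ` whose renormalized localization center spacing
`min_{i ≠ j} |x_j - x_i| ⬝ c` is at least `s`. -/
def DCScount (d L : ℕ) (v : ZLat d → ℝ) (x : Fin (nsites d L) → Box d L)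
    (IΛ : Set ℝ) (c s : ℝ) : ℕ :=
  countGen d L fun j =>
    sortedEig d L v j ∈ IΛ ∧ ∀ i, i ≠ j → s ≤ boxDist L (x j) (x i) * c

/-- The empirical distribution of the localization center spacings. -/
def DCS (d L : ℕ) (v : ZLat d → ℝ) (x : Fin (nsites d L) → Box d L)
    (IΛ : Set ℝ) (c s : ℝ) : ℝ :=
  (DCScount d L v x IΛ c s : ℝ) / (countEig d L v IΛ : ℝ)

/-- The supremum norm of a point of `ℤ^d`, as a real number. -/
def latNorm {d : ℕ} (x : ZLat d) : ℝ :=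
  ((Finset.univ.sup fun i => (x i).natAbs : ℕ) : ℝ)

/-- `φ` is a normalized `ℓ²(ℤ^d)` eigenfunction of the infinite volume operator
`H_ω = -Δ + V_ω` with eigenvalue `E`. -/
def IsEigenfunction (d : ℕ) (v : ZLat d → ℝ) (E : ℝ) (φ : ZLat d → ℝ) : Prop :=
  Summable (fun n => φ n ^ 2) ∧ (∑' n, φ n ^ 2) = 1 ∧
  ∀ n : ZLat d,
    (∑ i : Fin d, (φ (Function.update n i (n i + 1)) + φ (Function.update n i (n i - 1))))
      + v n * φ n = E * φ n

/-- `γ` is a localization center of `φ : ℓ²(ℤ^d)`: a maximizer of `|φ|`. -/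
def IsCenter {d : ℕ} (φ : ZLat d → ℝ) (γ : ZLat d) : Prop := ∀ n, |φ n| ≤ |φ γ|

/-- Property (Loc') on `I`: almost surely, every normalized eigenfunction with energy in `I`
decays exponentially away from any of its localization centers. -/
def LocPrime (d : ℕ) {Ω : Type*} [MeasurableSpace Ω] (Pr : Measure Ω)
    (V : Ω → ZLat d → ℝ) (I : Set ℝ) (q : ℝ) : Prop :=
  ∃ γ > (0 : ℝ), ∃ C : Ω → ℝ, Integrable C Pr ∧
    ∀ᵐ ω ∂Pr, 0 < C ω ∧
      ∀ E ∈ I, ∀ φ : ZLat d → ℝ, IsEigenfunction d (V ω) E φ →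
        ∀ xE : ZLat d, IsCenter φ xE → ∀ x : ZLat d,
          |φ x| ≤ C ω * (1 + latNorm xE ^ 2) ^ (q / 2) * Real.exp (-γ * latNorm (x - xE))

/-- The set of eigenvalues of the infinite volume operator `H_ω` lying in `IΛ` and having a
localization center in `Λ_L`. -/
def eigSet (d : ℕ) (v : ZLat d → ℝ) (IΛ : Set ℝ) (L : ℕ) : Set ℝ :=
  {E | E ∈ IΛ ∧ ∃ φ x, IsEigenfunction d v E φ ∧ IsCenter φ x ∧ ∀ i, |x i| ≤ (L : ℤ)}

/-- `N(I_L, L)`: the number of eigenvalues of `H_ω` in `IΛ` with a localization center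
in `Λ_L`. -/
def eigCount (d : ℕ) (v : ZLat d → ℝ) (IΛ : Set ℝ) (L : ℕ) : ℕ := (eigSet d v IΛ L).ncard

/-- The gap from `E` to the next element of `S`. -/
def gapNext (S : Set ℝ) (E : ℝ) : ℝ := sInf ((fun E' => E' - E) '' {E' | E' ∈ S ∧ E < E'})

/-- The empirical distribution of the renormalized spacings `δE_j = |Λ_L| (E_{j+1} - E_j)`
of the eigenvalues of the infinite volume operator `H_ω` in `IΛ` with localization center
in `Λ_L`. -/
def DLSinf (d : ℕ) (v : ZLat d → ℝ) (IΛ : Set ℝ) (L : ℕ) (x : ℝ) : ℝ :=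
  (({E | E ∈ eigSet d v IΛ L ∧ x ≤ volΛ d L * gapNext (eigSet d v IΛ L) E}).ncard : ℝ)
    / (eigCount d v IΛ L : ℝ)

/-- The weight of a Poisson law. -/
def poissonPMF (μ : ℝ) (k : ℕ) : ℝ := Real.exp (-μ) * μ ^ k / (k.factorial : ℝ)

/-! At a localization center `γ'` of a normalized `φ` on `Λ` one has `|φ γ'|² ≥ 1/|Λ|`. On the
event of exponential localization, `|φ γ'| ≤ C |Λ|^C e^{-γ dist(γ, γ')}` for any other center `γ`,
and taking logarithms bounds `dist(γ, γ')` by a multiple of `log |Λ|`. -/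

lemma one_le_card_mul_sq_of_isMaxAbs {ι : Type*} [Fintype ι] {φ : ι → ℝ}
    (hnorm : ∑ γ, φ γ ^ 2 = 1) {γ₀ : ι} (hmax : ∀ γ, |φ γ| ≤ |φ γ₀|) :
    1 ≤ Fintype.card ι * φ γ₀ ^ 2 := by
  calc (1 : ℝ) = ∑ γ, φ γ ^ 2 := hnorm.symm
    _ ≤ ∑ _γ : ι, φ γ₀ ^ 2 := Finset.sum_le_sum fun γ _ => sq_le_sq.mpr (hmax γ)
    _ = Fintype.card ι * φ γ₀ ^ 2 := by rw [Finset.sum_const, nsmul_eq_mul, Finset.card_univ]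

lemma nsites_eq_volΛ (d L : ℕ) : (nsites d L : ℝ) = volΛ d L := by
  rw [volΛ, nsites, Fintype.card_fun, ZMod.card, Fintype.card_fin, Nat.cast_pow]

lemma one_le_log_volΛ {d L : ℕ} (hd : 0 < d) (hL : 1 ≤ L) : 1 ≤ Real.log (volΛ d L) := by
  have hside : (3 : ℝ) ≤ ((2 * L + 1 : ℕ) : ℝ) := by exact_mod_cast (by omega : 3 ≤ 2 * L + 1)
  have hvol : (3 : ℝ) ≤ volΛ d L :=
    calc (3 : ℝ) ≤ 3 ^ d := le_self_pow₀ (by norm_num) hd.ne'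
      _ ≤ volΛ d L := pow_le_pow_left₀ (by norm_num) hside d
  calc (1 : ℝ) ≤ Real.log 3 := by linarith [Real.log_three_gt_d9]
    _ ≤ Real.log (volΛ d L) := Real.log_le_log (by norm_num) hvol

/-- Taking logarithms gives `2γD ≤ (1 + 2C) log N + 2 log C`, and `log C ≤ |log C| log N`. -/
lemma lt_mul_log_of_one_le_mul_sq_decay {N C γ D : ℝ} (hN : 1 ≤ Real.log N) (hC : 0 < C)
    (hγ : 0 < γ) (h : 1 ≤ N * (C * N ^ C * Real.exp (-γ * D)) ^ 2) :
    D < (|Real.log C| + C + 1) / γ * Real.log N := by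
  have hN0 : 0 < N := pos_of_mul_pos_left (one_pos.trans_le h) (sq_nonneg _)
  have hlog := Real.log_nonneg h
  rw [Real.log_mul hN0.ne' (by positivity), Real.log_pow, Real.log_mul (by positivity)
    (Real.exp_pos _).ne', Real.log_mul hC.ne' (by positivity), Real.log_rpow hN0,
    Real.log_exp] at hlog
  have hlogC : Real.log C ≤ |Real.log C| * Real.log N :=
    (le_abs_self _).trans (le_mul_of_one_le_right (abs_nonneg _) hN)
  rw [div_mul_eq_mul_div, lt_div_iff₀ hγ]
  push_cast at hlog
  nlinarith

theorem localization_center_diameter_general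
    (d : ℕ) (hd : 0 < d)
    {Ω : Type*} [MeasurableSpace Ω] (Pr : Measure Ω) [IsProbabilityMeasure Pr]
    (V : Ω → ZLat d → ℝ)
    -- `I = [a,b]` is a compact interval of `Σ = [-2d,2d] + supp g` lying in the
    -- region of complete localization of `H_ω`
    (a b : ℝ)
    (hloc : CompleteLocRegion d Pr V (Set.Icc a b))
 :
    ∀ p > (0 : ℝ), ∃ C > (0 : ℝ), ∀ L : ℕ, 1 ≤ L →
      1 - volΛ d L ^ (-p) ≤
        (Pr {ω | ∀ E ∈ Set.Icc a b, ∀ φ : Box d L → ℝ,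
            (ham d L (V ω)).mulVec φ = E • φ → (∑ γ, φ γ ^ 2) = 1 →
            ∀ γ γ' : Box d L, IsLocCenter φ γ → IsLocCenter φ γ' →
              boxDist L γ γ' < C * Real.log (volΛ d L)}).toReal := by
  obtain ⟨γc, hγc, hdecay⟩ := hloc
  intro p hp
  obtain ⟨C, hC, hprob⟩ := hdecay p hp
  refine ⟨(|Real.log C| + C + 1) / γc, by positivity, fun L hL => (hprob L hL).trans ?_⟩
  refine ENNReal.toReal_mono (measure_ne_top _ _) (measure_mono fun ω hω => ?_)
  intro E hE φ hφ hnorm γ γ' hγ hγ'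
  refine lt_mul_log_of_one_le_mul_sq_decay (one_le_log_volΛ hd hL) hC hγc ?_
  calc (1 : ℝ) ≤ volΛ d L * φ γ' ^ 2 := by
        simpa only [nsites_eq_volΛ] using one_le_card_mul_sq_of_isMaxAbs hnorm hγ'
    _ ≤ volΛ d L * (C * volΛ d L ^ C * Real.exp (-γc * boxDist L γ γ')) ^ 2 := by
        refine mul_le_mul_of_nonneg_left (sq_le_sq.mpr ?_) (by rw [volΛ]; positivity)
        exact (hω E hE φ hφ hnorm γ hγ γ').trans (le_abs_self _)

/-- **Diameter of the set of localization centers** (Lemma `le:1`): for any `p > 0` there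
is `C_p > 0` such that, with probability at least `1 - |Λ|^{-p}`, for every normalized
eigenvector of `H_ω(Λ)` whose eigenvalue lies in the localized region `I`, the diameter of
its set of localization centers is less than `C_p log |Λ|`. -/
theorem localization_center_diameter
    (d : ℕ) (hd : 0 < d)
    {Ω : Type*} [MeasurableSpace Ω] (Pr : Measure Ω) [IsProbabilityMeasure Pr]
    (V : Ω → ZLat d → ℝ) (g : ℝ → ℝ) (hV : AndersonPotential d Pr V g)
    -- `I = [a,b]` is a compact interval of `Σ = [-2d,2d] + supp g` lying in the
    -- region of complete localization of `H_ω`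
    (a b : ℝ) (hab : a < b)
    (hIsub : Set.Icc a b ⊆ Set.Icc (-(2 * (d : ℝ))) (2 * (d : ℝ)) + tsupport g)
    (hloc : CompleteLocRegion d Pr V (Set.Icc a b))
 :
    ∀ p > (0 : ℝ), ∃ C > (0 : ℝ), ∀ L : ℕ, 1 ≤ L →
      1 - volΛ d L ^ (-p) ≤
        (Pr {ω | ∀ E ∈ Set.Icc a b, ∀ φ : Box d L → ℝ,
            (ham d L (V ω)).mulVec φ = E • φ → (∑ γ, φ γ ^ 2) = 1 →
            ∀ γ γ' : Box d L, IsLocCenter φ γ → IsLocCenter φ γ' →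
              boxDist L γ γ' < C * Real.log (volΛ d L)}).toReal :=
  localization_center_diameter_general d hd Pr V a b hloc

end
end

section
/- Fix q > 2d. Then there exists γ > 0 such that, ω-almost surely, there exists C_ω > 1 with the following property: if x(E) and x'(E) are two centers of localization for the same energy E ∈ I ∩ σ(H_ω), then |x(E) − x'(E)| ≤ γ^{−2}(log⟨x(E)⟩ + log C_ω)^{1/ξ}. -/
open MeasureTheory ProbabilityTheory Filter Topology Finset
open scoped Pointwise ENNReal

noncomputable section

/-! If `φ` and `φ'` are eigenfunctions of the same energy with centers `x` and `x'`, normalization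
and the decay bound give `|φ x| ≳ (C_ω ⟨x⟩^q)⁻¹`, and when `x, x'` are far apart `φ'` is much smaller
than that at `x` (and `φ` at `x'`). A normalized combination `ψ = c (φ ± φ')`, with the sign making
`c ≥ 1/2`, is again an eigenfunction of that energy, of size `≳ |φ x|` at `x` and `≳ |φ' x'|` at `x'`.
Applying the decay bound to `ψ` from its own center `z` at both points and using the triangle inequality
gives `e^{γ t} ≲ ⟨x⟩^{4q} (1 + t)^{3q}` for some `t ≥ |x - x'|`, hence `|x - x'| ≤ A (log ⟨x⟩ + K)`
with `A` depending only on `q, γ`. As `ξ ≤ 1`, raising the bracket to the power `1/ξ` only helps. -/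

open Real

variable {d : ℕ}

lemma latNorm_eq_norm (x : ZLat d) : latNorm x = ‖x‖ := by
  simp_rw [latNorm, Pi.norm_def, ← NNReal.natCast_natAbs, ← Nat.cast_finsetSup (R := NNReal)]
  rfl

/-- The Japanese bracket `⟨x⟩` of the paper. -/
def jap (x : ZLat d) : ℝ := √(1 + ‖x‖ ^ 2)

lemma one_le_jap (x : ZLat d) : 1 ≤ jap x :=
  one_le_sqrt.2 (by nlinarith [norm_nonneg x])

lemma jap_pos (x : ZLat d) : 0 < jap x := one_pos.trans_le (one_le_jap x)

lemma jap_le_mul (x y : ZLat d) : jap x ≤ jap y * (1 + ‖x - y‖) := by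
  have hx : ‖x‖ ≤ ‖y‖ + ‖x - y‖ := norm_le_norm_add_norm_sub' x y
  have hw := norm_nonneg (x - y)
  rw [jap, sqrt_le_iff, mul_pow, jap, sq_sqrt (by positivity)]
  refine ⟨by positivity, ?_⟩
  nlinarith [pow_le_pow_left₀ (norm_nonneg x) hx 2, mul_nonneg hw (sq_nonneg (‖y‖ - 1)),
    mul_nonneg hw (sq_nonneg ‖y‖), sq_nonneg (‖y‖ * ‖x - y‖)]

lemma jap_rpow (x : ZLat d) (q : ℝ) : jap x ^ q = (1 + ‖x‖ ^ 2) ^ (q / 2) := by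
  rw [jap, sqrt_eq_rpow, ← rpow_mul (by positivity)]
  ring_nf

lemma summable_exp_neg_mul_abs {c : ℝ} (hc : 0 < c) :
    Summable fun m : ℤ => exp (-c * |(m : ℝ)|) := by
  have hgeom : Summable fun n : ℕ => exp (-c) ^ n :=
    summable_geometric_of_lt_one (exp_pos _).le (exp_lt_one_iff.2 (by linarith))
  refine Summable.of_nat_of_neg ?_ ?_ <;>
    refine hgeom.congr fun n => ?_ <;> simp [← exp_nat_mul, mul_comm]

lemma summable_exp_neg_mul_sum_abs {c : ℝ} (hc : 0 < c) :
    ∀ d, Summable fun n : ZLat d => exp (-c * ∑ i, |(n i : ℝ)|)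
  | 0 => .of_finite
  | d + 1 => by
    have := (summable_exp_neg_mul_abs hc).mul_of_nonneg (summable_exp_neg_mul_sum_abs hc d)
      (fun _ => (exp_pos _).le) (fun _ => (exp_pos _).le)
    refine (this.comp_injective (Fin.consEquiv fun _ => ℤ).symm.injective).congr fun n => ?_
    simp [Fin.sum_univ_succ, mul_add, exp_add, Fin.tail]

lemma summable_exp_neg_mul_norm {γ : ℝ} (hγ : 0 < γ) :
    Summable fun n : ZLat d => exp (-γ * ‖n‖) := by
  -- `‖n‖ ≥ (∑ i, |n i|) / (d + 1)`; the `+ 1` spares a separate case `d = 0`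
  refine (summable_exp_neg_mul_sum_abs (c := γ / (d + 1)) (by positivity) d).of_nonneg_of_le
    (fun _ => (exp_pos _).le) fun n => exp_le_exp.2 ?_
  have hsum : ∑ i, |(n i : ℝ)| ≤ (d + 1) * ‖n‖ := by
    calc ∑ i, |(n i : ℝ)| ≤ ∑ _i : Fin d, ‖n‖ := by
          gcongr; exact norm_le_pi_norm n _
      _ ≤ (d + 1) * ‖n‖ := by simp; nlinarith [norm_nonneg n]
  rw [neg_mul, neg_mul, neg_le_neg_iff, div_mul_eq_mul_div, div_le_iff₀ (by positivity)]
  nlinarith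

def expSum (d : ℕ) (γ : ℝ) : ℝ := ∑' n : ZLat d, exp (-γ * ‖n‖)

lemma one_le_expSum {γ : ℝ} (hγ : 0 < γ) : 1 ≤ expSum d γ := by
  simpa [expSum] using (summable_exp_neg_mul_norm (d := d) hγ).le_tsum 0 fun _ _ => (exp_pos _).le

lemma tsum_exp_neg_mul_norm_sub (γ : ℝ) (z : ZLat d) :
    ∑' x : ZLat d, exp (-γ * ‖x - z‖) = expSum d γ :=
  (Equiv.subRight z).tsum_eq fun n => exp (-γ * ‖n‖)

lemma exists_isCenter {u : ZLat d → ℝ} (hs : Summable fun n => u n ^ 2) (hu : u ≠ 0) :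
    ∃ z, IsCenter u z := by
  obtain ⟨n₀, hn₀ : u n₀ ≠ 0⟩ := Function.ne_iff.1 hu
  have hfin : {n | u n₀ ^ 2 ≤ u n ^ 2}.Finite := by
    refine (eventually_cofinite.1 <| hs.tendsto_cofinite_zero.eventually <|
      gt_mem_nhds (by positivity : 0 < u n₀ ^ 2)).subset fun n hn => ?_
    simpa using hn
  obtain ⟨z, hz₀, hz⟩ := Set.exists_max_image _ (fun n => u n ^ 2) hfin ⟨n₀, le_refl (u n₀ ^ 2)⟩
  refine ⟨z, fun n => sq_le_sq.1 ?_⟩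
  by_cases hn : u n₀ ^ 2 ≤ u n ^ 2
  · exact hz n hn
  · exact (not_le.1 hn).le.trans hz₀

lemma one_le_abs_mul_of_isCenter {u : ZLat d → ℝ} (hs : Summable fun n => u n ^ 2)
    (h1 : ∑' n, u n ^ 2 = 1) {z : ZLat d} (hz : IsCenter u z) {M γ : ℝ} (hγ : 0 < γ)
    (hdec : ∀ x, |u x| ≤ M * exp (-γ * ‖x - z‖)) :
    1 ≤ |u z| * (M * expSum d γ) := by
  have hsum : Summable fun x => exp (-γ * ‖x - z‖) :=
    (Equiv.subRight z).summable_iff.2 (summable_exp_neg_mul_norm hγ)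
  calc 1 = ∑' x, u x ^ 2 := h1.symm
    _ ≤ ∑' x, |u z| * (M * exp (-γ * ‖x - z‖)) := by
        refine hs.tsum_le_tsum (fun x => ?_) ((hsum.mul_left M).mul_left _)
        rw [← sq_abs, sq]
        exact mul_le_mul (hz x) (hdec x) (abs_nonneg _) (abs_nonneg _)
    _ = |u z| * (M * expSum d γ) := by
        rw [tsum_mul_left, tsum_mul_left, tsum_exp_neg_mul_norm_sub]

section L2

variable {ι : Type*} {f g : ι → ℝ}

lemma abs_mul_le_half_add_sq (a b : ℝ) : |a * b| ≤ (a ^ 2 + b ^ 2) / 2 := by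
  have := two_mul_le_add_sq |a| |b|
  rw [sq_abs, sq_abs] at this
  rw [abs_mul]
  linarith

lemma summable_mul_of_summable_sq (hf : Summable fun i => f i ^ 2)
    (hg : Summable fun i => g i ^ 2) : Summable fun i => f i * g i :=
  .of_norm_bounded ((hf.add hg).div_const 2) fun _ => abs_mul_le_half_add_sq _ _

lemma abs_tsum_mul_le (hf : Summable fun i => f i ^ 2) (hg : Summable fun i => g i ^ 2) :
    |∑' i, f i * g i| ≤ (∑' i, f i ^ 2 + ∑' i, g i ^ 2) / 2 := by
  rw [← hf.tsum_add hg, ← tsum_div_const]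
  exact (norm_tsum_le_tsum_norm (summable_mul_of_summable_sq hf hg).norm).trans
    ((summable_mul_of_summable_sq hf hg).norm.tsum_le_tsum (fun i => abs_mul_le_half_add_sq _ _)
      ((hf.add hg).div_const 2))

end L2

lemma le_of_mul_le_add_mul_log {γ c t B : ℝ} (hγ : 0 < γ) (hc : 0 ≤ c) (ht : 0 ≤ t)
    (h : γ * t ≤ B + c * log (1 + t)) : t ≤ 2 / γ * (B + c * log (1 + 2 * c / γ)) := by
  set s := 1 + 2 * c / γ
  have hs : 1 ≤ s := le_add_of_nonneg_right (by positivity)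
  -- the weight `1 / s` is chosen so that `c / s ≤ γ / 2`
  have hlog : log (1 + t) ≤ t / s + log s := by
    have := log_le_sub_one_of_pos (x := (1 + t) / s) (by positivity)
    rw [log_div (by positivity) (by positivity), add_div] at this
    linarith [(div_le_one (by positivity)).2 hs]
  have hct : c * (t / s) ≤ γ * t / 2 := by
    have hγs : γ * s = γ + 2 * c := by simp only [s]; field_simp
    rw [mul_div_assoc', div_le_div_iff₀ (by positivity) two_pos, mul_right_comm γ, hγs]
    nlinarith [mul_nonneg hγ.le ht]
  rw [div_mul_eq_mul_div, le_div_iff₀ hγ]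
  linarith [mul_le_mul_of_nonneg_left hlog hc]

section Eigenfunction

variable {v : ZLat d → ℝ} {E : ℝ} {φ φ' : ZLat d → ℝ}

lemma IsEigenfunction.ne_zero {u : ZLat d → ℝ} (hu : IsEigenfunction d v E u) : u ≠ 0 := by
  rintro rfl
  simpa using hu.2.1

lemma IsEigenfunction.mul_add_mul (hφ : IsEigenfunction d v E φ)
    (hφ' : IsEigenfunction d v E φ') {a b : ℝ}
    (hab : a ^ 2 + 2 * a * b * ∑' n, φ n * φ' n + b ^ 2 = 1) :
    IsEigenfunction d v E fun x => a * φ x + b * φ' x := by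
  obtain ⟨hs, h1, heq⟩ := hφ
  obtain ⟨hs', h1', heq'⟩ := hφ'
  have hsm := summable_mul_of_summable_sq hs hs'
  have hsq : ∀ x, (a * φ x + b * φ' x) ^ 2
      = a ^ 2 * φ x ^ 2 + 2 * a * b * (φ x * φ' x) + b ^ 2 * φ' x ^ 2 := fun x => by ring
  have hsum := ((hs.mul_left (a ^ 2)).add (hsm.mul_left (2 * a * b))).add (hs'.mul_left (b ^ 2))
  refine ⟨by simpa only [hsq] using hsum, ?_, fun n => ?_⟩
  · simp only [hsq]
    rw [Summable.tsum_add ((hs.mul_left _).add (hsm.mul_left _)) (hs'.mul_left _),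
      Summable.tsum_add (hs.mul_left _) (hsm.mul_left _), tsum_mul_left, tsum_mul_left,
      tsum_mul_left, h1, h1']
    linarith
  · simp only [mul_add, Finset.sum_add_distrib, ← Finset.mul_sum] at heq heq' ⊢
    linear_combination a * heq n + b * heq' n

lemma IsEigenfunction.exists_abs_sub_abs_le (hφ : IsEigenfunction d v E φ)
    (hφ' : IsEigenfunction d v E φ') :
    ∃ ψ, IsEigenfunction d v E ψ ∧ ∀ x, |(|φ x| - |φ' x|)| ≤ 2 * |ψ x| := by
  set α := ∑' n, φ n * φ' n
  obtain ⟨σ, hσ, hσα⟩ : ∃ σ : ℝ, |σ| = 1 ∧ σ * α = |α| := by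
    rcases le_total 0 α with h | h
    · exact ⟨1, by simp, by simp [abs_of_nonneg h]⟩
    · exact ⟨-1, by simp, by simp [abs_of_nonpos h]⟩
  have hα : |α| ≤ 1 := by
    simpa [hφ.2.1, hφ'.2.1] using abs_tsum_mul_le hφ.1 hφ'.1
  set c := (√(2 + 2 * |α|))⁻¹
  have hc : c ^ 2 * (2 + 2 * |α|) = 1 := by
    rw [inv_pow, sq_sqrt (by positivity), inv_mul_cancel₀ (by positivity)]
  have hc_half : 1 / 2 ≤ c := by
    rw [one_div, inv_le_inv₀ (by norm_num) (by positivity), sqrt_le_iff]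
    constructor <;> linarith
  refine ⟨fun x => c * φ x + c * σ * φ' x, hφ.mul_add_mul hφ' ?_, fun x => ?_⟩
  · have hσ2 : σ ^ 2 = 1 := by rw [← sq_abs, hσ, one_pow]
    linear_combination c ^ 2 * hσ2 + 2 * c ^ 2 * hσα + hc
  · calc |(|φ x| - |φ' x|)| = |(|φ x| - |-(σ * φ' x)|)| := by rw [abs_neg, abs_mul, hσ, one_mul]
      _ ≤ |φ x + σ * φ' x| := by simpa using abs_abs_sub_abs_le_abs_sub (φ x) (-(σ * φ' x))
      _ ≤ 2 * |c * φ x + c * σ * φ' x| := by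
        rw [mul_assoc, ← mul_add, abs_mul, abs_of_pos (by positivity : 0 < c)]
        nlinarith [abs_nonneg (φ x + σ * φ' x)]

/-- `A xE` stands for the amplitude `C_ω ⟨x(E)⟩^q` of (Loc'). -/
def HasCenterDecay (v : ZLat d → ℝ) (E : ℝ) (A : ZLat d → ℝ) (γ : ℝ) : Prop :=
  ∀ u, IsEigenfunction d v E u → ∀ xE, IsCenter u xE → ∀ x, |u x| ≤ A xE * exp (-γ * ‖x - xE‖)

namespace HasCenterDecay

variable {A : ZLat d → ℝ} {γ : ℝ} {xc xc' : ZLat d}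

lemma one_le_abs_mul (h : HasCenterDecay v E A γ) (hγ : 0 < γ) (hφ : IsEigenfunction d v E φ)
    (hxc : IsCenter φ xc) : 1 ≤ |φ xc| * (A xc * expSum d γ) :=
  one_le_abs_mul_of_isCenter hφ.1 hφ.2.1 hxc hγ (h φ hφ xc hxc)

lemma two_mul_abs_lt_of_far (h : HasCenterDecay v E A γ) (hγ : 0 < γ)
    (hφ : IsEigenfunction d v E φ) (hφ' : IsEigenfunction d v E φ')
    (hxc : IsCenter φ xc) (hxc' : IsCenter φ' xc')
    (hfar : 2 * expSum d γ * A xc * A xc' < exp (γ * ‖xc - xc'‖)) :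
    2 * |φ' xc| < |φ xc| := by
  have hlow := h.one_le_abs_mul hγ hφ hxc
  have hcross := h φ' hφ' xc' hxc' xc
  have hpos : 0 < A xc * expSum d γ := pos_of_mul_pos_right (one_pos.trans_le hlow) (abs_nonneg _)
  rw [neg_mul, exp_neg] at hcross
  have : 2 * |φ' xc| * (A xc * expSum d γ) < 1 := by
    calc 2 * |φ' xc| * (A xc * expSum d γ)
        ≤ 2 * (A xc' * (exp (γ * ‖xc - xc'‖))⁻¹) * (A xc * expSum d γ) := by gcongr
      _ = 2 * expSum d γ * A xc * A xc' / exp (γ * ‖xc - xc'‖) := by ring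
      _ < 1 := (div_lt_one (exp_pos _)).2 hfar
  exact lt_of_mul_lt_mul_right (this.trans_le hlow) hpos.le

lemma exp_mul_norm_sub_le (h : HasCenterDecay v E A γ) (hγ : 0 < γ)
    (hφ : IsEigenfunction d v E φ) (hxc : IsCenter φ xc) {ψ : ZLat d → ℝ}
    (hψ : IsEigenfunction d v E ψ) {z : ZLat d} (hz : IsCenter ψ z)
    (hsmall : 2 * |φ' xc| < |φ xc|) (hcomb : |(|φ xc| - |φ' xc|)| ≤ 2 * |ψ xc|) :
    exp (γ * ‖xc - z‖) ≤ 4 * expSum d γ * A xc * A z := by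
  have hlow := h.one_le_abs_mul hγ hφ hxc
  have hpos : 0 < A xc * expSum d γ := pos_of_mul_pos_right (one_pos.trans_le hlow) (abs_nonneg _)
  have hψ_le := h ψ hψ z hz xc
  rw [neg_mul, exp_neg] at hψ_le
  have hφ_le : |φ xc| ≤ 4 * (A z * (exp (γ * ‖xc - z‖))⁻¹) := by
    rw [abs_of_nonneg (by linarith [abs_nonneg (φ' xc)])] at hcomb
    linarith
  refine (one_le_div (exp_pos _)).1 ?_
  calc 1 ≤ 4 * (A z * (exp (γ * ‖xc - z‖))⁻¹) * (A xc * expSum d γ) :=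
        hlow.trans (mul_le_mul_of_nonneg_right hφ_le hpos.le)
    _ = 4 * expSum d γ * A xc * A z / exp (γ * ‖xc - z‖) := by ring

lemma exists_exp_mul_add_le_of_far (h : HasCenterDecay v E A γ) (hγ : 0 < γ)
    (hφ : IsEigenfunction d v E φ) (hφ' : IsEigenfunction d v E φ')
    (hxc : IsCenter φ xc) (hxc' : IsCenter φ' xc')
    (hfar : 2 * expSum d γ * A xc * A xc' < exp (γ * ‖xc - xc'‖)) :
    ∃ z, exp (γ * (‖xc - z‖ + ‖xc' - z‖)) ≤
      4 * expSum d γ * A xc * A z * (4 * expSum d γ * A xc' * A z) := by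
  obtain ⟨ψ, hψ, hcomb⟩ := hφ.exists_abs_sub_abs_le hφ'
  obtain ⟨z, hz⟩ := exists_isCenter hψ.1 hψ.ne_zero
  have hfar' : 2 * expSum d γ * A xc' * A xc < exp (γ * ‖xc' - xc‖) := by
    rwa [mul_right_comm, norm_sub_rev]
  have h₁ := h.exp_mul_norm_sub_le hγ hφ hxc hψ hz (h.two_mul_abs_lt_of_far hγ hφ hφ' hxc hxc' hfar)
    (hcomb xc)
  have h₂ := h.exp_mul_norm_sub_le hγ hφ' hxc' hψ hz
    (h.two_mul_abs_lt_of_far hγ hφ' hφ hxc' hxc hfar') (by rw [abs_sub_comm]; exact hcomb xc')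
  refine ⟨z, ?_⟩
  rw [mul_add, exp_add]
  exact mul_le_mul h₁ h₂ (exp_pos _).le ((exp_pos _).le.trans h₁)

lemma exists_exp_mul_le (h : HasCenterDecay v E A γ) (hγ : 0 < γ) {q : ℝ} (hq : 0 ≤ q)
    (hA₁ : ∀ x, 1 ≤ A x) (hA : ∀ x y, A x ≤ A y * (1 + ‖x - y‖) ^ q)
    (hφ : IsEigenfunction d v E φ) (hφ' : IsEigenfunction d v E φ')
    (hxc : IsCenter φ xc) (hxc' : IsCenter φ' xc') :
    ∃ t ≥ ‖xc - xc'‖, exp (γ * t) ≤ 16 * expSum d γ ^ 2 * A xc ^ 4 * ((1 + t) ^ q) ^ 3 := by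
  have hS : 1 ≤ expSum d γ := one_le_expSum hγ
  have hA_le {y : ZLat d} {t : ℝ} (hy : ‖xc - y‖ ≤ t) : A y ≤ A xc * (1 + t) ^ q :=
    (hA y xc).trans (by rw [norm_sub_rev]; gcongr; linarith [hA₁ xc])
  have hA₀ (x : ZLat d) : 0 ≤ A x := zero_le_one.trans (hA₁ x)
  by_cases hfar : 2 * expSum d γ * A xc * A xc' < exp (γ * ‖xc - xc'‖)
  · obtain ⟨z, hz⟩ := h.exists_exp_mul_add_le_of_far hγ hφ hφ' hxc hxc' hfar
    have hD : ‖xc - xc'‖ ≤ ‖xc - z‖ + ‖xc' - z‖ := by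
      simpa [norm_sub_rev xc' z] using norm_sub_le_norm_sub_add_norm_sub xc z xc'
    refine ⟨_, hD, hz.trans ?_⟩
    have hxc'_le := hA_le hD
    have hz_le := hA_le (y := z) (le_add_of_nonneg_right (norm_nonneg (xc' - z)))
    have := hA₀ xc; have := hA₀ xc'; have := hA₀ z
    calc 4 * expSum d γ * A xc * A z * (4 * expSum d γ * A xc' * A z)
        = 16 * expSum d γ ^ 2 * A xc * A xc' * A z ^ 2 := by ring
      _ ≤ 16 * expSum d γ ^ 2 * A xc * (A xc * (1 + (‖xc - z‖ + ‖xc' - z‖)) ^ q)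
          * (A xc * (1 + (‖xc - z‖ + ‖xc' - z‖)) ^ q) ^ 2 := by
        gcongr
      _ = _ := by ring
  · refine ⟨_, le_rfl, (not_lt.1 hfar).trans ?_⟩
    have hP : 1 ≤ (1 + ‖xc - xc'‖) ^ q := one_le_rpow (by linarith [norm_nonneg (xc - xc')]) hq
    have hxc'_le := hA_le (y := xc') le_rfl
    have := hA₁ xc
    calc 2 * expSum d γ * A xc * A xc' ≤ 2 * expSum d γ * A xc * (A xc * (1 + ‖xc - xc'‖) ^ q) := by
          gcongr
      _ = 2 * expSum d γ * A xc ^ 2 * (1 + ‖xc - xc'‖) ^ q := by ring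
      _ ≤ _ := by
        gcongr
        · norm_num
        · exact le_self_pow₀ hS two_ne_zero
        · norm_num
        · exact le_self_pow₀ hP three_ne_zero

lemma norm_sub_le (h : HasCenterDecay v E A γ) (hγ : 0 < γ) {q : ℝ} (hq : 0 ≤ q)
    (hA₁ : ∀ x, 1 ≤ A x) (hA : ∀ x y, A x ≤ A y * (1 + ‖x - y‖) ^ q)
    (hφ : IsEigenfunction d v E φ) (hφ' : IsEigenfunction d v E φ')
    (hxc : IsCenter φ xc) (hxc' : IsCenter φ' xc') :
    ‖xc - xc'‖ ≤ 2 / γ * (log (16 * expSum d γ ^ 2) + 4 * log (A xc) +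
      3 * q * log (1 + 2 * (3 * q) / γ)) := by
  obtain ⟨t, hDt, ht⟩ := h.exists_exp_mul_le hγ hq hA₁ hA hφ hφ' hxc hxc'
  have ht₀ : 0 ≤ t := (norm_nonneg _).trans hDt
  have hA₀ : 0 < A xc := one_pos.trans_le (hA₁ xc)
  have hS : 0 < expSum d γ := one_pos.trans_le (one_le_expSum hγ)
  have hlog := log_le_log (exp_pos _) ht
  rw [log_exp, log_mul (by positivity) (by positivity), log_mul (by positivity) (by positivity),
    log_pow, log_pow, log_rpow (by positivity)] at hlog
  exact hDt.trans (le_of_mul_le_add_mul_log hγ (by positivity) ht₀ (by push_cast at hlog; linarith))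

end HasCenterDecay

end Eigenfunction

lemma mul_jap_rpow_le {C q : ℝ} (hC : 0 ≤ C) (hq : 0 ≤ q) (x y : ZLat d) :
    C * jap x ^ q ≤ C * jap y ^ q * (1 + ‖x - y‖) ^ q := by
  rw [mul_assoc, ← mul_rpow (jap_pos y).le (by positivity)]
  gcongr
  · exact (jap_pos x).le
  · exact jap_le_mul x y

lemma exists_norm_sub_le_mul_log_jap_add {C q γ : ℝ} (hγ : 0 < γ) (hC : 1 ≤ C) (hq : 0 ≤ q) :
    ∃ K ≥ 1, ∀ (v : ZLat d → ℝ) (E : ℝ), HasCenterDecay v E (fun x => C * jap x ^ q) γ →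
      ∀ φ φ' xc xc', IsEigenfunction d v E φ → IsEigenfunction d v E φ' →
        IsCenter φ xc → IsCenter φ' xc' → ‖xc - xc'‖ ≤ (1 + 8 * q / γ) * (log (jap xc) + K) := by
  set X := 2 / γ * (log (16 * expSum d γ ^ 2) + 4 * log C + 3 * q * log (1 + 2 * (3 * q) / γ))
  refine ⟨max 1 X, le_max_left _ _, fun v E h φ φ' xc xc' hφ hφ' hxc hxc' => ?_⟩
  have hD := h.norm_sub_le hγ hq
    (fun x => one_le_mul_of_one_le_of_one_le hC (one_le_rpow (one_le_jap x) hq))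
    (mul_jap_rpow_le (zero_le_one.trans hC) hq) hφ hφ' hxc hxc'
  rw [log_mul (one_pos.trans_le hC).ne' (rpow_pos_of_pos (jap_pos xc) q).ne', log_rpow (jap_pos xc)]
    at hD
  have hℓ : 0 ≤ log (jap xc) := log_nonneg (one_le_jap xc)
  have hK : 0 ≤ 8 * q / γ * max 1 X := by positivity
  calc ‖xc - xc'‖ ≤ X + 8 * q / γ * log (jap xc) := hD.trans_eq (by ring)
    _ ≤ (1 + 8 * q / γ) * (log (jap xc) + max 1 X) := by nlinarith [le_max_right 1 X]

lemma hasCenterDecay_of_latNorm {v : ZLat d → ℝ} {E C q γ : ℝ}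
    (h : ∀ u, IsEigenfunction d v E u → ∀ xE, IsCenter u xE → ∀ x,
      |u x| ≤ C * (1 + latNorm xE ^ 2) ^ (q / 2) * exp (-γ * latNorm (x - xE))) :
    HasCenterDecay v E (fun x => max C 1 * jap x ^ max q 0) γ := by
  intro u hu xE hxE x
  refine (h u hu xE hxE x).trans ?_
  rw [latNorm_eq_norm, latNorm_eq_norm, ← jap_rpow]
  have := jap_pos xE
  dsimp only
  gcongr
  · exact le_max_left C 1
  · exact one_le_jap xE
  · exact le_max_left q 0

theorem localization_centers_close_general
    (d : ℕ)
    {Ω : Type*} [MeasurableSpace Ω] (Pr : Measure Ω)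
    (V : Ω → ZLat d → ℝ)
    -- `I = [a,b]` is a compact interval in the region of complete localization,
    -- on which property (Loc') holds
    (a b : ℝ)
    (q : ℝ)
    (hloc : LocPrime d Pr V (Set.Icc a b) q)
    -- `ξ` is the exponent from the localization estimates
    (ξ : ℝ) (hξ0 : 0 < ξ) (hξ1 : ξ ≤ 1)
 :
    ∃ γ > (0 : ℝ), ∀ᵐ ω ∂Pr, ∃ Cω > (1 : ℝ),
      ∀ E ∈ Set.Icc a b, ∀ φ φ' : ZLat d → ℝ,
        IsEigenfunction d (V ω) E φ → IsEigenfunction d (V ω) E φ' →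
        ∀ xc xc' : ZLat d, IsCenter φ xc → IsCenter φ' xc' →
          latNorm (xc - xc') ≤
            γ⁻¹ ^ 2 * (Real.log (Real.sqrt (1 + latNorm xc ^ 2)) + Real.log Cω) ^ (1 / ξ) := by
  obtain ⟨γ, hγ, C, -, hC⟩ := hloc
  refine ⟨(√(1 + 8 * max q 0 / γ))⁻¹, by positivity, ?_⟩
  filter_upwards [hC] with ω hω
  obtain ⟨K, hK, hclose⟩ := exists_norm_sub_le_mul_log_jap_add (d := d) hγ
    (le_max_right (C ω) 1) (le_max_right q 0)
  refine ⟨exp K, one_lt_exp_iff.2 (by linarith), fun E hE φ φ' hφ hφ' xc xc' hxc hxc' => ?_⟩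
  have hbase : 1 ≤ log (jap xc) + K := by linarith [log_nonneg (one_le_jap xc)]
  rw [inv_inv, sq_sqrt (by positivity), log_exp, latNorm_eq_norm, latNorm_eq_norm]
  calc ‖xc - xc'‖ ≤ (1 + 8 * max q 0 / γ) * (log (jap xc) + K) :=
        hclose (V ω) E (hasCenterDecay_of_latNorm (hω.2 E hE)) φ φ' xc xc' hφ hφ' hxc hxc'
    _ ≤ (1 + 8 * max q 0 / γ) * (log (jap xc) + K) ^ (1 / ξ) := by
        gcongr
        exact self_le_rpow_of_one_le hbase ((one_le_div hξ0).2 hξ1)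

/-- **Localization centers of a given energy are close to each other**
(Proposition `pro:1` (1)): under (Loc'), there is `γ > 0` such that `ω`-almost surely,
for some `C_ω > 1`, any two localization centers `x(E), x'(E)` attached to the same energy
`E ∈ I ∩ σ(H_ω)` satisfy `|x(E) - x'(E)| ≤ γ^{-2} (log ⟨x(E)⟩ + log C_ω)^{1/ξ}`. -/
theorem localization_centers_close
    (d : ℕ) (hd : 0 < d)
    {Ω : Type*} [MeasurableSpace Ω] (Pr : Measure Ω) [IsProbabilityMeasure Pr]
    (V : Ω → ZLat d → ℝ) (g : ℝ → ℝ) (hV : AndersonPotential d Pr V g)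
    -- `I = [a,b]` is a compact interval in the region of complete localization,
    -- on which property (Loc') holds
    (a b : ℝ) (hab : a < b)
    (q : ℝ) (hq : 2 * (d : ℝ) < q)
    (hloc : LocPrime d Pr V (Set.Icc a b) q)
    -- `ξ` is the exponent from the localization estimates
    (ξ : ℝ) (hξ0 : 0 < ξ) (hξ1 : ξ ≤ 1)
 :
    ∃ γ > (0 : ℝ), ∀ᵐ ω ∂Pr, ∃ Cω > (1 : ℝ),
      ∀ E ∈ Set.Icc a b, ∀ φ φ' : ZLat d → ℝ,
        IsEigenfunction d (V ω) E φ → IsEigenfunction d (V ω) E φ' →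
        ∀ xc xc' : ZLat d, IsCenter φ xc → IsCenter φ' xc' →
          latNorm (xc - xc') ≤
            γ⁻¹ ^ 2 * (Real.log (Real.sqrt (1 + latNorm xc ^ 2)) + Real.log Cω) ^ (1 / ξ) :=
  localization_centers_close_general d Pr V a b q hloc ξ hξ0 hξ1

end
end
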